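/- Projection of paths in PIIS: Let T(n) be a PIIS with n agents and k ≤ n. If π = g¹ a¹ g² a² … is a path of T(n), then the projected sequence ρ = g¹_{[k]} a'¹ g²_{[k]} a'² …, where a'^j = a^j if a^j is an action of some agent in {1,…,k} (or synchronous) and a'^j = ε otherwise, is a valid path of T(k). -/
import Mathlib


/-- A template agent: template states, initial state, synchronous and
asynchronous template actions (the silent action is treated separately),
protocol, deterministic evolution function, and labeling. -/
structure Template (AP : Type) where
  L : Type
  init : L
  SAct : Type
  AAct : Type
  protS : L → SAct → Prop
  protA : L → AAct → Prop
  tS : L → SAct → L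
  tA : L → AAct → L
  lab : L → AP → Prop

/-- Global states of the instance `T(n)`: a template state per agent. -/
def GState {AP : Type} (T : Template AP) (n : ℕ) : Type := Fin n → T.L

/-- Concrete actions of `T(n)`: synchronous actions (shared by all agents),
asynchronous actions indexed by the unique agent performing them, and the
(joint) silent action. -/
inductive CAct {AP : Type} (T : Template AP) (n : ℕ) : Type where
  | sync : T.SAct → CAct T n
  | async : T.AAct → Fin n → CAct T n
  | eps : CAct T n

/-- The global interleaved transition relation of `T(n)`: a synchronous
action is performed by all agents simultaneously, an asynchronous action by
exactly one agent (all others keep their state), and the silent action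
leaves the global state unchanged. -/
def GTrans {AP : Type} (T : Template AP) (n : ℕ) :
    CAct T n → GState T n → GState T n → Prop
  | .sync s, g, g' => ∀ i, T.protS (g i) s ∧ g' i = T.tS (g i) s
  | .async b i, g, g' =>
      T.protA (g i) b ∧ g' i = T.tA (g i) b ∧ ∀ j, j ≠ i → g' j = g j
  | .eps, g, g' => g' = g

/-- The initial global state of `T(n)`. -/
def GInit {AP : Type} (T : Template AP) (n : ℕ) : GState T n := fun _ => T.init

/-- Reachability from the initial state of `T(n)`. -/
def GReach {AP : Type} (T : Template AP) (n : ℕ) (g : GState T n) : Prop :=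
  Relation.ReflTransGen (fun x y => ∃ a, GTrans T n a x y) (GInit T n) g

/-- A path of `T(n)`: an infinite sequence of global states and actions in
which every consecutive pair of states is related by the corresponding
global interleaved transition. -/
def IsPath {AP : Type} (T : Template AP) (n : ℕ)
    (gs : ℕ → GState T n) (as : ℕ → CAct T n) : Prop :=
  ∀ j, GTrans T n (as j) (gs j) (gs (j + 1))

/-- Projection of a global state of `T(n)` onto the agents `1,…,k`. -/
def projState {AP : Type} {T : Template AP} {n k : ℕ} (h : k ≤ n)
    (g : GState T n) : GState T k := fun i => g (Fin.castLE h i)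

/-- Projection of an action of `T(n)` onto `T(k)`: synchronous actions are
kept, asynchronous actions of agents in `{1,…,k}` are kept (reindexed), and
all other actions become the silent action `ε`. -/
def projAct {AP : Type} {T : Template AP} {n k : ℕ} (_h : k ≤ n) :
    CAct T n → CAct T k
  | .sync s => .sync s
  | .async b i => if hi : (i : ℕ) < k then .async b ⟨(i : ℕ), hi⟩ else .eps
  | .eps => .eps

/-- Projection of paths: if `π = g¹ a¹ g² a² …` is a path of `T(n)` and
`k ≤ n`, then the projected sequence — states restricted to agents `1,…,k`
and actions projected (actions of other agents replaced by `ε`) — is a valid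
path of `T(k)`. -/
theorem path_projection {AP : Type} (T : Template AP) (n k : ℕ) (h : k ≤ n)
    (gs : ℕ → GState T n) (as : ℕ → CAct T n) (hp : IsPath T n gs as) :
    IsPath T k (fun j => projState h (gs j)) (fun j => projAct h (as j)) := by
  intro j
  have hj := hp j
  cases ha : as j with
  | sync s =>
      rw [ha] at hj
      simp only [ha, projAct]
      intro i
      exact ⟨(hj (Fin.castLE h i)).1, (hj (Fin.castLE h i)).2⟩
  | async b i =>
      rw [ha] at hj
      obtain ⟨h1, h2, h3⟩ := hj
      simp only [ha, projAct]
      by_cases hi : (i : ℕ) < k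
      · simp only [hi, dif_pos]
        refine ⟨?_, ?_, ?_⟩
        · have : Fin.castLE h (⟨(i:ℕ), hi⟩ : Fin k) = i := by
            ext; rfl
          simpa [projState, this] using h1
        · have : Fin.castLE h (⟨(i:ℕ), hi⟩ : Fin k) = i := by ext; rfl
          simpa [projState, this] using h2
        · intro jj hjj
          apply h3
          intro hc
          apply hjj
          ext
          simp [← hc]
      · simp only [hi, dif_neg, not_false_iff]
        funext x
        apply h3
        intro hc
        exact hi (hc ▸ x.isLt)
  | eps =>
      rw [ha] at hj
      simp only [ha, projAct]
      funext x
      exact congrFun (hj : gs (j+1) = gs j) _
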